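/- Let π₁, π₂ be PDLsf[Loop] path formulas. For every MSC M and event e such that ⟦π₁·π₂⟧_M(e) is nonempty: min_{π₁·π₂}(e) = min_{π₂}( min_{π₁·(⟨π₂⟩true)?}(e) ) and max_{π₁·π₂}(e) = max_{π₂}( max_{π₁·(⟨π₂⟩true)?}(e) ), where true is a tautological event formula. -/

import Mathlib

set_option maxHeartbeats 1000000

/-! ## Message sequence charts -/

/-- A message sequence chart (MSC) over processes `P` and labels `Lab`.
Events are natural numbers; `E` is the finite nonempty set of events. -/
structure MSC (P : Type) (Lab : Type) where
  /-- the finite set of events -/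
  E : Finset ℕ
  nonemptyE : E.Nonempty
  /-- process edges `→` (direct successor on a process) -/
  proc : ℕ → ℕ → Prop
  /-- message edges `◁` -/
  msg : ℕ → ℕ → Prop
  /-- location (process) of each event -/
  loc : ℕ → P
  /-- label of each event -/
  lab : ℕ → Lab
  proc_mem : ∀ e f, proc e f → e ∈ E ∧ f ∈ E
  msg_mem : ∀ e f, msg e f → e ∈ E ∧ f ∈ E
  proc_loc : ∀ e f, proc e f → loc e = loc f
  msg_loc : ∀ e f, msg e f → loc e ≠ loc f
  /-- on each process, any two events are comparable w.r.t. `→⁺` -/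
  proc_total : ∀ e f, e ∈ E → f ∈ E → loc e = loc f →
    e = f ∨ Relation.TransGen proc e f ∨ Relation.TransGen proc f e
  /-- `→` is the direct-successor (covering) relation of the order `→⁺` -/
  proc_cover : ∀ e f, proc e f →
    ¬ ∃ g, Relation.TransGen proc e g ∧ Relation.TransGen proc g f
  /-- every event belongs to at most one message edge -/
  msg_once : ∀ e f e' f', msg e f → msg e' f' →
    (e = e' ∨ e = f' ∨ f = e' ∨ f = f') → e = e' ∧ f = f'
  /-- FIFO condition -/
  fifo : ∀ e f e' f', msg e f → msg e' f' → loc e = loc e' → loc f = loc f' →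
    (Relation.ReflTransGen proc e e' ↔ Relation.ReflTransGen proc f f')
  /-- `→ ∪ ◁` is acyclic -/
  acyclic : ∀ e, ¬ Relation.TransGen (fun a b => proc a b ∨ msg a b) e e

namespace MSC

variable {P Lab : Type}

/-- `≤proc`, the reflexive transitive closure of `→`. -/
def procLe (M : MSC P Lab) : ℕ → ℕ → Prop := Relation.ReflTransGen M.proc

/-- `<proc`, the transitive closure of `→`. -/
def procLt (M : MSC P Lab) : ℕ → ℕ → Prop := Relation.TransGen M.proc

/-- the happened-before relation `≤ = (→ ∪ ◁)*`. -/
def hb (M : MSC P Lab) : ℕ → ℕ → Prop :=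
  Relation.ReflTransGen (fun a b => M.proc a b ∨ M.msg a b)

/-- Relabelling an MSC (same events and edges, new labelling). -/
def relabel {Γ : Type} (M : MSC P Lab) (γ : ℕ → Γ) : MSC P Γ where
  E := M.E
  nonemptyE := M.nonemptyE
  proc := M.proc
  msg := M.msg
  loc := M.loc
  lab := γ
  proc_mem := M.proc_mem
  msg_mem := M.msg_mem
  proc_loc := M.proc_loc
  msg_loc := M.msg_loc
  proc_total := M.proc_total
  proc_cover := M.proc_cover
  msg_once := M.msg_once
  fifo := M.fifo
  acyclic := M.acyclic

end MSC

/-! ## Star-free PDL -/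

mutual
/-- Event formulas of star-free PDL. -/
inductive EF (P Lab : Type) : Type where
  | proc : P → EF P Lab
  | lab : Lab → EF P Lab
  | or : EF P Lab → EF P Lab → EF P Lab
  | not : EF P Lab → EF P Lab
  | dia : PF P Lab → EF P Lab → EF P Lab
  | loop : PF P Lab → EF P Lab
/-- Path formulas of star-free PDL. -/
inductive PF (P Lab : Type) : Type where
  | next : PF P Lab
  | prev : PF P Lab
  | msg : P → P → PF P Lab
  | msgInv : P → P → PF P Lab
  | nextG : EF P Lab → PF P Lab
  | prevG : EF P Lab → PF P Lab
  | jump : P → P → PF P Lab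
  | test : EF P Lab → PF P Lab
  | comp : PF P Lab → PF P Lab → PF P Lab
  | union : PF P Lab → PF P Lab → PF P Lab
  | inter : PF P Lab → PF P Lab → PF P Lab
  | compl : PF P Lab → PF P Lab
end

mutual
/-- Satisfaction of event formulas at an event. -/
def EF.sat {P Lab : Type} (M : MSC P Lab) : EF P Lab → ℕ → Prop
  | .proc p, e => e ∈ M.E ∧ M.loc e = p
  | .lab a, e => e ∈ M.E ∧ M.lab e = a
  | .or φ ψ, e => EF.sat M φ e ∨ EF.sat M ψ e
  | .not φ, e => e ∈ M.E ∧ ¬ EF.sat M φ e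
  | .dia π φ, e => ∃ f, PF.sem M π e f ∧ EF.sat M φ f
  | .loop π, e => PF.sem M π e e
/-- Semantics of path formulas as binary relations on events. -/
def PF.sem {P Lab : Type} (M : MSC P Lab) : PF P Lab → ℕ → ℕ → Prop
  | .next, e, f => M.proc e f
  | .prev, e, f => M.proc f e
  | .msg p q, e, f => M.msg e f ∧ M.loc e = p ∧ M.loc f = q
  | .msgInv p q, e, f => M.msg f e ∧ M.loc f = p ∧ M.loc e = q
  | .nextG φ, e, f => M.procLt e f ∧ ∀ g, M.procLt e g → M.procLt g f → EF.sat M φ g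
  | .prevG φ, e, f => M.procLt f e ∧ ∀ g, M.procLt f g → M.procLt g e → EF.sat M φ g
  | .jump p r, e, f => e ∈ M.E ∧ f ∈ M.E ∧ M.loc e = p ∧ M.loc f = r
  | .test φ, e, f => e = f ∧ EF.sat M φ e
  | .comp π₁ π₂, e, f => ∃ g, PF.sem M π₁ e g ∧ PF.sem M π₂ g f
  | .union π₁ π₂, e, f => PF.sem M π₁ e f ∨ PF.sem M π₂ e f
  | .inter π₁ π₂, e, f => PF.sem M π₁ e f ∧ PF.sem M π₂ e f
  | .compl π, e, f => e ∈ M.E ∧ f ∈ M.E ∧ ¬ PF.sem M π e f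
end

/-- Sentences of star-free PDL. -/
inductive PDLS (P Lab : Type) : Type where
  | ex : EF P Lab → PDLS P Lab
  | or : PDLS P Lab → PDLS P Lab → PDLS P Lab
  | not : PDLS P Lab → PDLS P Lab

/-- Satisfaction of PDL sentences. -/
def PDLS.sat {P Lab : Type} (M : MSC P Lab) : PDLS P Lab → Prop
  | .ex φ => ∃ e ∈ M.E, EF.sat M φ e
  | .or ξ ζ => PDLS.sat M ξ ∨ PDLS.sat M ζ
  | .not ξ => ¬ PDLS.sat M ξ

/-- The four optional operators of star-free PDL. -/
inductive PDLOp : Type where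
  | loop | union | inter | compl
deriving DecidableEq

mutual
/-- `EF.inFrag R φ` : the event formula `φ` belongs to the fragment `PDLsf[R]`. -/
def EF.inFrag {P Lab : Type} (R : Set PDLOp) : EF P Lab → Prop
  | .proc _ => True
  | .lab _ => True
  | .or φ ψ => EF.inFrag R φ ∧ EF.inFrag R ψ
  | .not φ => EF.inFrag R φ
  | .dia π φ => PF.inFrag R π ∧ EF.inFrag R φ
  | .loop π => PDLOp.loop ∈ R ∧ PF.inFrag R π
/-- `PF.inFrag R π` : the path formula `π` belongs to the fragment `PDLsf[R]`. -/
def PF.inFrag {P Lab : Type} (R : Set PDLOp) : PF P Lab → Prop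
  | .next => True
  | .prev => True
  | .msg _ _ => True
  | .msgInv _ _ => True
  | .nextG φ => EF.inFrag R φ
  | .prevG φ => EF.inFrag R φ
  | .jump _ _ => True
  | .test φ => EF.inFrag R φ
  | .comp π₁ π₂ => PF.inFrag R π₁ ∧ PF.inFrag R π₂
  | .union π₁ π₂ => PDLOp.union ∈ R ∧ PF.inFrag R π₁ ∧ PF.inFrag R π₂
  | .inter π₁ π₂ => PDLOp.inter ∈ R ∧ PF.inFrag R π₁ ∧ PF.inFrag R π₂
  | .compl π => PDLOp.compl ∈ R ∧ PF.inFrag R π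
end

/-- `PDLS.inFrag R ξ` : the sentence `ξ` belongs to the fragment `PDLsf[R]`. -/
def PDLS.inFrag {P Lab : Type} (R : Set PDLOp) : PDLS P Lab → Prop
  | .ex φ => EF.inFrag R φ
  | .or ξ ζ => PDLS.inFrag R ξ ∧ PDLS.inFrag R ζ
  | .not ξ => PDLS.inFrag R ξ

/-- Conjunction of event formulas (derived operator). -/
def EF.and {P Lab : Type} (φ ψ : EF P Lab) : EF P Lab :=
  .not (.or (.not φ) (.not ψ))

/-- `isMinOf M π e m` : `m` is the `≤proc`-least element of `⟦π⟧_M(e)`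
(in particular `⟦π⟧_M(e)` is nonempty). -/
def isMinOf {P Lab : Type} (M : MSC P Lab) (π : PF P Lab) (e m : ℕ) : Prop :=
  PF.sem M π e m ∧ ∀ f, PF.sem M π e f → M.procLe m f

/-- `isMaxOf M π e m` : `m` is the `≤proc`-greatest element of `⟦π⟧_M(e)`
(in particular `⟦π⟧_M(e)` is nonempty). -/
def isMaxOf {P Lab : Type} (M : MSC P Lab) (π : PF P Lab) (e m : ℕ) : Prop :=
  PF.sem M π e m ∧ ∀ f, PF.sem M π e f → M.procLe f m

/-! ## MSO/FO logic over MSCs -/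

/-- Formulas of MSO over MSCs: first-order kernel with atoms `p(x)`, `a(x)`,
`x = y`, `x → y`, `x ◁ y`, `x ≤ y` and additionally `x ∈ X_k` (monadic
second-order variables, used for the EMSO prefix). -/
inductive FOS (P Lab : Type) : Type where
  | pred : P → ℕ → FOS P Lab
  | lab : Lab → ℕ → FOS P Lab
  | eq : ℕ → ℕ → FOS P Lab
  | edge : ℕ → ℕ → FOS P Lab
  | medge : ℕ → ℕ → FOS P Lab
  | le : ℕ → ℕ → FOS P Lab
  | inSet : ℕ → ℕ → FOS P Lab
  | or : FOS P Lab → FOS P Lab → FOS P Lab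
  | not : FOS P Lab → FOS P Lab
  | ex : ℕ → FOS P Lab → FOS P Lab

/-- Satisfaction, with a first-order valuation `ν` and a second-order valuation `σ`.
First-order quantification ranges over the events of the MSC. -/
def FOS.sat {P Lab : Type} (M : MSC P Lab) : FOS P Lab → (ℕ → ℕ) → (ℕ → Set ℕ) → Prop
  | .pred p x, ν, _ => M.loc (ν x) = p
  | .lab a x, ν, _ => M.lab (ν x) = a
  | .eq x y, ν, _ => ν x = ν y
  | .edge x y, ν, _ => M.proc (ν x) (ν y)
  | .medge x y, ν, _ => M.msg (ν x) (ν y)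
  | .le x y, ν, _ => M.hb (ν x) (ν y)
  | .inSet x k, ν, σ => ν x ∈ σ k
  | .or Φ Ψ, ν, σ => FOS.sat M Φ ν σ ∨ FOS.sat M Ψ ν σ
  | .not Φ, ν, σ => ¬ FOS.sat M Φ ν σ
  | .ex x Φ, ν, σ => ∃ e ∈ M.E, FOS.sat M Φ (Function.update ν x e) σ

/-- Free first-order variables. -/
def FOS.free {P Lab : Type} : FOS P Lab → Finset ℕ
  | .pred _ x => {x}
  | .lab _ x => {x}
  | .eq x y => {x, y}
  | .edge x y => {x, y}
  | .medge x y => {x, y}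
  | .le x y => {x, y}
  | .inSet x _ => {x}
  | .or Φ Ψ => FOS.free Φ ∪ FOS.free Ψ
  | .not Φ => FOS.free Φ
  | .ex x Φ => (FOS.free Φ).erase x

/-- All first-order variables occurring (free or bound). -/
def FOS.vars {P Lab : Type} : FOS P Lab → Finset ℕ
  | .pred _ x => {x}
  | .lab _ x => {x}
  | .eq x y => {x, y}
  | .edge x y => {x, y}
  | .medge x y => {x, y}
  | .le x y => {x, y}
  | .inSet x _ => {x}
  | .or Φ Ψ => FOS.vars Φ ∪ FOS.vars Ψ
  | .not Φ => FOS.vars Φ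
  | .ex x Φ => insert x (FOS.vars Φ)

/-- A formula is first-order (`FO[→,◁,≤]`) iff it contains no set atoms. -/
def FOS.noSets {P Lab : Type} : FOS P Lab → Prop
  | .pred _ _ => True
  | .lab _ _ => True
  | .eq _ _ => True
  | .edge _ _ => True
  | .medge _ _ => True
  | .le _ _ => True
  | .inSet _ _ => False
  | .or Φ Ψ => FOS.noSets Φ ∧ FOS.noSets Ψ
  | .not Φ => FOS.noSets Φ
  | .ex _ Φ => FOS.noSets Φ

/-! ## Communicating finite-state machines -/

/-- Actions of a process: internal `⟨a⟩`, send `!(a,m,q)`, receive `?(a,m,q)`. -/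
inductive CAct (P Lab Msg : Type) : Type where
  | int : Lab → CAct P Lab Msg
  | snd : Lab → Msg → P → CAct P Lab Msg
  | rcv : Lab → Msg → P → CAct P Lab Msg

/-- The label performed by an action. -/
def CAct.label {P Lab Msg : Type} : CAct P Lab Msg → Lab
  | .int a => a
  | .snd a _ _ => a
  | .rcv a _ _ => a

/-- A communicating finite-state machine over `P` and `Lab`. -/
structure CFM (P Lab : Type) where
  /-- states -/
  S : Type
  finS : Fintype S
  /-- messages -/
  Msg : Type
  finMsg : Fintype Msg
  /-- initial state of each process -/
  ι : P → S
  /-- transition relation of each process -/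
  Δ : P → S → CAct P Lab Msg → S → Prop
  Δ_snd : ∀ p s a m q s', Δ p s (.snd a m q) s' → q ≠ p
  Δ_rcv : ∀ p s a m q s', Δ p s (.rcv a m q) s' → q ≠ p
  /-- acceptance condition -/
  Acc : (P → S) → Prop

/-- Existence of an accepting run of a CFM on an MSC. -/
def CFM.Accepts {P Lab : Type} (A : CFM P Lab) (M : MSC P Lab) : Prop :=
  ∃ (src tgt : ℕ → A.S) (act : ℕ → CAct P Lab A.Msg),
    (∀ e ∈ M.E, A.Δ (M.loc e) (src e) (act e) (tgt e)) ∧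
    (∀ e ∈ M.E, (act e).label = M.lab e) ∧
    (∀ e ∈ M.E, (¬ ∃ f, M.proc f e) → src e = A.ι (M.loc e)) ∧
    (∀ e f, M.proc e f → tgt e = src f) ∧
    (∀ e ∈ M.E, (¬ ∃ f, M.msg e f) → (¬ ∃ f, M.msg f e) → ∃ a, act e = .int a) ∧
    (∀ e f, M.msg e f →
      ∃ a a' m, act e = .snd a m (M.loc f) ∧ act f = .rcv a' m (M.loc e)) ∧
    (∃ fin : P → A.S,
      (∀ p, (∀ e ∈ M.E, M.loc e ≠ p) → fin p = A.ι p) ∧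
      (∀ e ∈ M.E, (¬ ∃ f, M.proc e f) → fin (M.loc e) = tgt e) ∧
      A.Acc fin)

/-- The language of a CFM. -/
def CFM.lang {P Lab : Type} (A : CFM P Lab) : Set (MSC P Lab) := {M | A.Accepts M}

/-! ## Letter-to-letter MSC transducers -/

/-- The relation accepted by a letter-to-letter MSC transducer from `Lab` to `Γ`,
i.e., a CFM over `P` and `Lab × Γ`. -/
def Ltrans {P Lab Γ : Type} (A : CFM P (Lab × Γ)) (M : MSC P Lab) (N : MSC P Γ) : Prop :=
  ∃ γ : ℕ → Γ, N = M.relabel γ ∧ A.Accepts (M.relabel fun e => (M.lab e, γ e))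

/-- `M_φ` : the MSC over `Bool` obtained from `M` by labelling each event with
the truth value of the event formula `φ`. -/
noncomputable def MSC.evalEF {P Lab : Type} (M : MSC P Lab) (φ : EF P Lab) : MSC P Bool :=
  M.relabel fun e => @ite Bool (EF.sat M φ e) (Classical.propDecidable _) true false

/-! ## Boolean combinations -/

/-- Boolean combinations over atoms of type `α`. -/
inductive BC (α : Type) : Type where
  | atom : α → BC α
  | or : BC α → BC α → BC α
  | not : BC α → BC α

/-- Evaluation of a boolean combination given truth values of the atoms. -/
def BC.eval {α : Type} (v : α → Prop) : BC α → Prop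
  | .atom a => v a
  | .or b c => BC.eval v b ∨ BC.eval v c
  | .not b => ¬ BC.eval v b

/-- The atoms occurring in a boolean combination. -/
def BC.atoms {α : Type} : BC α → Set α
  | .atom a => {a}
  | .or b c => BC.atoms b ∪ BC.atoms c
  | .not b => BC.atoms b

/-! ## Bounded MSCs -/

/-- `r` is a linearization of `M`: a total order on the events containing
the happened-before relation. -/
def IsLinearization {P Lab : Type} (M : MSC P Lab) (r : ℕ → ℕ → Prop) : Prop :=
  (∀ e ∈ M.E, r e e) ∧
  (∀ e ∈ M.E, ∀ f ∈ M.E, r e f → r f e → e = f) ∧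
  (∀ e ∈ M.E, ∀ f ∈ M.E, ∀ g ∈ M.E, r e f → r f g → r e g) ∧
  (∀ e ∈ M.E, ∀ f ∈ M.E, r e f ∨ r f e) ∧
  (∀ e ∈ M.E, ∀ f ∈ M.E, M.hb e f → r e f)

/-- `r` is a `B`-bounded linearization of `M`: at any point, each channel
contains at most `B` pending messages. -/
def IsBBoundedLin {P Lab : Type} (M : MSC P Lab) (r : ℕ → ℕ → Prop) (B : ℕ) : Prop :=
  IsLinearization M r ∧
  ∀ g ∈ M.E, ∀ p q : P, p ≠ q →
    Set.ncard {ef : ℕ × ℕ | M.msg ef.1 ef.2 ∧ M.loc ef.1 = p ∧ M.loc ef.2 = q ∧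
      r ef.1 g ∧ ¬ r ef.2 g} ≤ B

/-- `M` is `∃B`-bounded: some linearization of `M` is `B`-bounded. -/
def ExistsBBounded {P Lab : Type} (M : MSC P Lab) (B : ℕ) : Prop :=
  ∃ r : ℕ → ℕ → Prop, IsBBoundedLin M r B

/-- `g` is a send event on channel `(p,q)`. -/
def isSendOn {P Lab : Type} (M : MSC P Lab) (p q : P) (g : ℕ) : Prop :=
  M.loc g = p ∧ ∃ h, M.msg g h ∧ M.loc h = q

/-- `revB M B f g` : `f` is a receive event with matching send `e` on some
channel `(p,q)`, and `g` is the `B`-th send on channel `(p,q)` strictly after `e`. -/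
def revB {P Lab : Type} (M : MSC P Lab) (B : ℕ) (f g : ℕ) : Prop :=
  ∃ e, M.msg e f ∧ isSendOn M (M.loc e) (M.loc f) g ∧ M.procLt e g ∧
    Set.ncard {g' | isSendOn M (M.loc e) (M.loc f) g' ∧ M.procLt e g' ∧ M.procLe g' g} = B

/-- `≤_B = (≤ ∪ rev_B)*`. -/
def leB {P Lab : Type} (M : MSC P Lab) (B : ℕ) : ℕ → ℕ → Prop :=
  Relation.ReflTransGen (fun a b => (M.proc a b ∨ M.msg a b) ∨ revB M B a b)

/-- `<_B`, the strict part of `≤_B`. -/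
def ltB {P Lab : Type} (M : MSC P Lab) (B : ℕ) (e f : ℕ) : Prop :=
  leB M B e f ∧ ¬ leB M B f e

/-- `e ∥_B f` : incomparable w.r.t. `≤_B`. -/
def parB {P Lab : Type} (M : MSC P Lab) (B : ℕ) (e f : ℕ) : Prop :=
  ¬ leB M B e f ∧ ¬ leB M B f e

/-- `↑_B e = {g : e ≤_B g}`. -/
def upB {P Lab : Type} (M : MSC P Lab) (B : ℕ) (e : ℕ) : Set ℕ :=
  {g | leB M B e g}

/-- The order `≺_B` (w.r.t. a fixed total order on `P`): `e ≺_B f` iff `e <_B f`, or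
`e ∥_B f` and the `⊑`-minimum of `loc(↑_B e \ ↑_B f)` is strictly below the
`⊑`-minimum of `loc(↑_B f \ ↑_B e)`. -/
def precB {P Lab : Type} [LinearOrder P] (M : MSC P Lab) (B : ℕ) (e f : ℕ) : Prop :=
  ltB M B e f ∨
    (parB M B e f ∧ ∃ p ∈ M.loc '' (upB M B e \ upB M B f),
      ∀ q ∈ M.loc '' (upB M B f \ upB M B e), p < q)

/-! Path formulas of `PDLsf[Loop]` never cross: if `g ≤proc g'`, `g π f`, `g' π f'` and
`f' <proc f`, then also `g π f'` and `g' π f`. Each atomic path is either monotone (`→`, `←`,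
tests, and the message edges by FIFO) or closed under such an exchange, and the exchange
property survives composition. Consequently, the least event reachable by `π₁·π₂` from `e` is
reached through the least `π₁`-successor `m₁` of `e` that has a `π₂`-successor at all: a
`π₂`-target `f` of a later `π₁`-successor `g ≥ m₁` lying below `min_{π₂}(m₁)` would also be a
`π₂`-target of `m₁`. The maximum is symmetric. -/

open Relation

theorem Finset.exists_forall_rel_of_total {α : Type*} {r : α → α → Prop}
    (htrans : ∀ {a b c}, r a b → r b c → r a c) {s : Finset α}
    (htot : ∀ a ∈ s, ∀ b ∈ s, r a b ∨ r b a) (hs : s.Nonempty) :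
    ∃ m ∈ s, ∀ x ∈ s, r m x := by
  induction hs using Finset.Nonempty.cons_induction with
  | singleton a =>
    refine ⟨a, Finset.mem_singleton_self a, fun x hx => ?_⟩
    rw [Finset.mem_singleton.mp hx]
    exact (htot a (Finset.mem_singleton_self a) a (Finset.mem_singleton_self a)).elim id id
  | cons a s ha hs ih =>
    have htot_s : ∀ x ∈ s, ∀ y ∈ s, r x y ∨ r y x := fun x hx y hy =>
      htot x (Finset.mem_cons_of_mem hx) y (Finset.mem_cons_of_mem hy)
    obtain ⟨m, hm, hmin⟩ := ih htot_s
    rcases htot a (Finset.mem_cons_self a s) m (Finset.mem_cons_of_mem hm) with ham | hma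
    · refine ⟨a, Finset.mem_cons_self a s, fun x hx => ?_⟩
      rcases Finset.mem_cons.mp hx with rfl | hx
      · exact (htot x (Finset.mem_cons_self x s) x (Finset.mem_cons_self x s)).elim id id
      · exact htrans ham (hmin x hx)
    · refine ⟨m, Finset.mem_cons_of_mem hm, fun x hx => ?_⟩
      rcases Finset.mem_cons.mp hx with rfl | hx
      · exact hma
      · exact hmin x hx

namespace MSC

variable {P Lab : Type} (M : MSC P Lab)

theorem procLt_mem {e f : ℕ} (h : M.procLt e f) : e ∈ M.E ∧ f ∈ M.E := by
  induction h with
  | single h => exact M.proc_mem _ _ h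
  | tail _ h ih => exact ⟨ih.1, (M.proc_mem _ _ h).2⟩

theorem procLt_loc {e f : ℕ} (h : M.procLt e f) : M.loc e = M.loc f := by
  induction h with
  | single h => exact M.proc_loc _ _ h
  | tail _ h ih => exact ih.trans (M.proc_loc _ _ h)

theorem procLe_loc {e f : ℕ} (h : M.procLe e f) : M.loc e = M.loc f := by
  rcases reflTransGen_iff_eq_or_transGen.mp h with rfl | h
  · rfl
  · exact M.procLt_loc h

theorem procLt_irrefl (e : ℕ) : ¬ M.procLt e e := fun h =>
  M.acyclic e (TransGen.mono (fun _ _ => Or.inl) _ _ h)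

theorem not_procLt_of_procLe {e f : ℕ} (h : M.procLe e f) : ¬ M.procLt f e := fun h' =>
  M.procLt_irrefl e (TransGen.trans_right h h')

theorem procLe_antisymm {e f : ℕ} (h : M.procLe e f) (h' : M.procLe f e) : e = f := by
  rcases reflTransGen_iff_eq_or_transGen.mp h' with rfl | h'
  · rfl
  · exact absurd h' (M.not_procLt_of_procLe h)

theorem procLe_or_procLt {e f : ℕ} (he : e ∈ M.E) (hf : f ∈ M.E) (hl : M.loc e = M.loc f) :
    M.procLe e f ∨ M.procLt f e := by
  rcases M.proc_total e f he hf hl with rfl | h | h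
  · exact Or.inl ReflTransGen.refl
  · exact Or.inl h.to_reflTransGen
  · exact Or.inr h

theorem procLe_total {e f : ℕ} (he : e ∈ M.E) (hf : f ∈ M.E) (hl : M.loc e = M.loc f) :
    M.procLe e f ∨ M.procLe f e :=
  (M.procLe_or_procLt he hf hl).imp_right TransGen.to_reflTransGen

theorem proc_right_unique {g f f' : ℕ} (h : M.proc g f) (h' : M.proc g f') : f = f' := by
  have hl : M.loc f = M.loc f' := (M.proc_loc _ _ h).symm.trans (M.proc_loc _ _ h')
  rcases M.proc_total f f' (M.proc_mem _ _ h).2 (M.proc_mem _ _ h').2 hl with rfl | hlt | hlt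
  · rfl
  · exact absurd ⟨f, TransGen.single h, hlt⟩ (M.proc_cover g f' h')
  · exact absurd ⟨f', TransGen.single h', hlt⟩ (M.proc_cover g f h)

theorem proc_succ_mono {g g' f f' : ℕ} (hg : M.procLe g g')
    (h : M.proc g f) (h' : M.proc g' f') : M.procLe f f' := by
  rcases reflTransGen_iff_eq_or_transGen.mp hg with rfl | hlt
  · rw [M.proc_right_unique h h']
    exact ReflTransGen.refl
  · obtain ⟨c, hc, hcg⟩ := TransGen.head'_iff.mp hlt
    rw [M.proc_right_unique h hc]
    exact hcg.tail h'

theorem proc_pred_mono {g g' f f' : ℕ} (hg : M.procLe g g')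
    (h : M.proc f g) (h' : M.proc f' g') : M.procLe f f' := by
  have hl : M.loc f = M.loc f' :=
    ((M.proc_loc _ _ h).trans (M.procLe_loc hg)).trans (M.proc_loc _ _ h').symm
  refine (M.procLe_or_procLt (M.proc_mem _ _ h).1 (M.proc_mem _ _ h').1 hl).resolve_right ?_
  intro hlt
  obtain ⟨c, hc, hcf⟩ := TransGen.head'_iff.mp hlt
  rw [M.proc_right_unique hc h'] at hcf
  exact M.not_procLt_of_procLe hg (TransGen.trans_right hcf (TransGen.single h))

end MSC

section PDL

variable {P Lab : Type} {M : MSC P Lab}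

mutual
theorem EF.sat_mem : ∀ {φ : EF P Lab} {e : ℕ}, EF.sat M φ e → e ∈ M.E
  | .proc _, _, h => h.1
  | .lab _, _, h => h.1
  | .or _ _, _, h => h.elim EF.sat_mem EF.sat_mem
  | .not _, _, h => h.1
  | .dia _ _, _, ⟨_, h, _⟩ => (PF.sem_mem h).1
  | .loop _, _, h => (PF.sem_mem h).1

theorem PF.sem_mem : ∀ {π : PF P Lab} {e f : ℕ}, PF.sem M π e f → e ∈ M.E ∧ f ∈ M.E
  | .next, _, _, h => M.proc_mem _ _ h
  | .prev, _, _, h => (M.proc_mem _ _ h).symm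
  | .msg _ _, _, _, h => M.msg_mem _ _ h.1
  | .msgInv _ _, _, _, h => (M.msg_mem _ _ h.1).symm
  | .nextG _, _, _, h => M.procLt_mem h.1
  | .prevG _, _, _, h => (M.procLt_mem h.1).symm
  | .jump _ _, _, _, h => ⟨h.1, h.2.1⟩
  | .test _, _, _, ⟨rfl, h⟩ => ⟨EF.sat_mem h, EF.sat_mem h⟩
  | .comp _ _, _, _, ⟨_, h₁, h₂⟩ => ⟨(PF.sem_mem h₁).1, (PF.sem_mem h₂).2⟩
  | .union _ _, _, _, h => h.elim PF.sem_mem PF.sem_mem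
  | .inter _ _, _, _, h => PF.sem_mem h.1
  | .compl _, _, _, h => ⟨h.1, h.2.1⟩
end

theorem PF.loc_eq_of_sem : ∀ {π : PF P Lab}, PF.inFrag {PDLOp.loop} π →
    ∀ {e f e' f' : ℕ}, PF.sem M π e f → PF.sem M π e' f' → M.loc e = M.loc e' →
      M.loc f = M.loc f'
  | .next, _, _, _, _, _, h, h', hl =>
      (M.proc_loc _ _ h).symm.trans (hl.trans (M.proc_loc _ _ h'))
  | .prev, _, _, _, _, _, h, h', hl => (M.proc_loc _ _ h).trans (hl.trans (M.proc_loc _ _ h').symm)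
  | .msg _ _, _, _, _, _, _, h, h', _ => h.2.2.trans h'.2.2.symm
  | .msgInv _ _, _, _, _, _, _, h, h', _ => h.2.1.trans h'.2.1.symm
  | .nextG _, _, _, _, _, _, h, h', hl =>
      (M.procLt_loc h.1).symm.trans (hl.trans (M.procLt_loc h'.1))
  | .prevG _, _, _, _, _, _, h, h', hl =>
      (M.procLt_loc h.1).trans (hl.trans (M.procLt_loc h'.1).symm)
  | .jump _ _, _, _, _, _, _, h, h', _ => h.2.2.2.trans h'.2.2.2.symm
  | .test _, _, _, _, _, _, ⟨rfl, _⟩, ⟨rfl, _⟩, hl => hl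
  | .comp _ _, hπ, _, _, _, _, ⟨_, h₁, h₂⟩, ⟨_, h₁', h₂'⟩, hl =>
      PF.loc_eq_of_sem hπ.2 h₂ h₂' (PF.loc_eq_of_sem hπ.1 h₁ h₁' hl)
  | .union _ _, hπ, _, _, _, _, _, _, _ => by simp [PF.inFrag] at hπ
  | .inter _ _, hπ, _, _, _, _, _, _, _ => by simp [PF.inFrag] at hπ
  | .compl _, hπ, _, _, _, _, _, _, _ => by simp [PF.inFrag] at hπ

theorem PF.sem_of_crossed : ∀ {π : PF P Lab}, PF.inFrag {PDLOp.loop} π →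
    ∀ {g g' f f' : ℕ}, M.procLe g g' → PF.sem M π g f → PF.sem M π g' f' →
      M.procLt f' f → PF.sem M π g f' ∧ PF.sem M π g' f
  | .next, _, _, _, _, _, hg, h, h', hlt =>
      (M.not_procLt_of_procLe (M.proc_succ_mono hg h h') hlt).elim
  | .prev, _, _, _, _, _, hg, h, h', hlt =>
      (M.not_procLt_of_procLe (M.proc_pred_mono hg h h') hlt).elim
  | .msg _ _, _, g, g', f, f', hg, h, h', hlt =>
      have hf : M.procLe f f' :=
        (M.fifo g f g' f' h.1 h'.1 (h.2.1.trans h'.2.1.symm) (h.2.2.trans h'.2.2.symm)).mp hg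
      (M.not_procLt_of_procLe hf hlt).elim
  | .msgInv _ _, _, g, g', f, f', hg, h, h', hlt =>
      have hf : M.procLe f f' :=
        (M.fifo f g f' g' h.1 h'.1 (h.2.1.trans h'.2.1.symm) (M.procLe_loc hg)).mpr hg
      (M.not_procLt_of_procLe hf hlt).elim
  | .nextG _, _, _, _, _, _, hg, h, h', hlt =>
      ⟨⟨TransGen.trans_right hg h'.1, fun k hk₁ hk₂ => h.2 k hk₁ (hk₂.trans hlt)⟩,
        ⟨h'.1.trans hlt, fun k hk₁ hk₂ => h.2 k (TransGen.trans_right hg hk₁) hk₂⟩⟩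
  | .prevG _, _, _, _, _, _, hg, h, h', hlt =>
      ⟨⟨hlt.trans h.1, fun k hk₁ hk₂ => h'.2 k hk₁ (TransGen.trans_left hk₂ hg)⟩,
        ⟨TransGen.trans_left h.1 hg, fun k hk₁ hk₂ => h'.2 k (hlt.trans hk₁) hk₂⟩⟩
  | .jump _ _, _, _, _, _, _, _, h, h', _ =>
      ⟨⟨h.1, h'.2.1, h.2.2.1, h'.2.2.2⟩, ⟨h'.1, h.2.1, h'.2.2.1, h.2.2.2⟩⟩
  | .test _, _, _, _, _, _, hg, ⟨rfl, _⟩, ⟨rfl, _⟩, hlt => (M.not_procLt_of_procLe hg hlt).elim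
  | .comp _ _, hπ, _, _, _, _, hg, ⟨m, h₁, h₂⟩, ⟨m', h₁', h₂'⟩, hlt => by
      have hl : M.loc m = M.loc m' := PF.loc_eq_of_sem hπ.1 h₁ h₁' (M.procLe_loc hg)
      rcases M.procLe_or_procLt (PF.sem_mem h₁).2 (PF.sem_mem h₁').2 hl with hm | hm
      · obtain ⟨hmf', hm'f⟩ := PF.sem_of_crossed hπ.2 hm h₂ h₂' hlt
        exact ⟨⟨m, h₁, hmf'⟩, ⟨m', h₁', hm'f⟩⟩
      · obtain ⟨hgm', hg'm⟩ := PF.sem_of_crossed hπ.1 hg h₁ h₁' hm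
        exact ⟨⟨m', hgm', h₂'⟩, ⟨m, hg'm, h₂⟩⟩
  | .union _ _, hπ, _, _, _, _, _, _, _, _ => by simp [PF.inFrag] at hπ
  | .inter _ _, hπ, _, _, _, _, _, _, _, _ => by simp [PF.inFrag] at hπ
  | .compl _, hπ, _, _, _, _, _, _, _, _ => by simp [PF.inFrag] at hπ

section Extrema

variable {π : PF P Lab} {e m m' : ℕ}

theorem isMinOf_unique (hm : isMinOf M π e m) (hm' : isMinOf M π e m') : m = m' :=
  M.procLe_antisymm (hm.2 m' hm'.1) (hm'.2 m hm.1)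

theorem isMaxOf_unique (hm : isMaxOf M π e m) (hm' : isMaxOf M π e m') : m = m' :=
  M.procLe_antisymm (hm'.2 m hm.1) (hm.2 m' hm'.1)

theorem procLe_total_of_sem (hπ : PF.inFrag {PDLOp.loop} π) {f f' : ℕ}
    (hf : PF.sem M π e f) (hf' : PF.sem M π e f') : M.procLe f f' ∨ M.procLe f' f :=
  M.procLe_total (PF.sem_mem hf).2 (PF.sem_mem hf').2 (PF.loc_eq_of_sem hπ hf hf' rfl)

theorem exists_forall_rel_of_sem {r : ℕ → ℕ → Prop} (htrans : ∀ {a b c}, r a b → r b c → r a c)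
    (htot : ∀ f f', PF.sem M π e f → PF.sem M π e f' → r f f' ∨ r f' f)
    (hne : ∃ f, PF.sem M π e f) : ∃ m, PF.sem M π e m ∧ ∀ f, PF.sem M π e f → r m f := by
  classical
  have hmem : ∀ f, f ∈ M.E.filter (PF.sem M π e) ↔ PF.sem M π e f := fun f =>
    Finset.mem_filter.trans (and_iff_right_of_imp fun hf => (PF.sem_mem hf).2)
  obtain ⟨m, hm, hmin⟩ := Finset.exists_forall_rel_of_total (r := r) htrans
    (fun f hf f' hf' => htot f f' ((hmem f).1 hf) ((hmem f').1 hf'))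
    (hne.imp fun f => (hmem f).2)
  exact ⟨m, (hmem m).1 hm, fun f hf => hmin f ((hmem f).2 hf)⟩

theorem exists_isMinOf (hπ : PF.inFrag {PDLOp.loop} π) (hne : ∃ f, PF.sem M π e f) :
    ∃ m, isMinOf M π e m :=
  exists_forall_rel_of_sem (r := M.procLe) ReflTransGen.trans
    (fun _ _ hf hf' => procLe_total_of_sem hπ hf hf') hne

theorem exists_isMaxOf (hπ : PF.inFrag {PDLOp.loop} π) (hne : ∃ f, PF.sem M π e f) :
    ∃ m, isMaxOf M π e m :=
  exists_forall_rel_of_sem (r := flip M.procLe) (fun h h' => ReflTransGen.trans h' h)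
    (fun _ _ hf hf' => procLe_total_of_sem hπ hf' hf) hne

end Extrema

section Composition

variable {π₁ π₂ : PF P Lab} {tt : EF P Lab} {e m₁ n : ℕ}

theorem sem_comp_test_dia_iff (htt : ∀ f ∈ M.E, EF.sat M tt f) {g : ℕ} :
    PF.sem M (π₁.comp (.test (.dia π₂ tt))) e g ↔ PF.sem M π₁ e g ∧ ∃ f, PF.sem M π₂ g f := by
  constructor
  · rintro ⟨_, hg, rfl, f, hf, -⟩
    exact ⟨hg, f, hf⟩
  · rintro ⟨hg, f, hf⟩
    exact ⟨g, hg, rfl, f, hf, htt f (PF.sem_mem hf).2⟩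

theorem isMinOf_comp (h₁ : PF.inFrag {PDLOp.loop} π₁) (h₂ : PF.inFrag {PDLOp.loop} π₂)
    (htt : ∀ f ∈ M.E, EF.sat M tt f) (hm₁ : isMinOf M (π₁.comp (.test (.dia π₂ tt))) e m₁)
    (hn : isMinOf M π₂ m₁ n) : isMinOf M (π₁.comp π₂) e n := by
  have he₁ : PF.sem M π₁ e m₁ := ((sem_comp_test_dia_iff htt).1 hm₁.1).1
  refine ⟨⟨m₁, he₁, hn.1⟩, ?_⟩
  rintro f ⟨g, hg, hgf⟩
  have hm₁g : M.procLe m₁ g := hm₁.2 g ((sem_comp_test_dia_iff htt).2 ⟨hg, f, hgf⟩)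
  have hl : M.loc n = M.loc f :=
    PF.loc_eq_of_sem (π := π₁.comp π₂) ⟨h₁, h₂⟩ ⟨m₁, he₁, hn.1⟩ ⟨g, hg, hgf⟩ rfl
  refine (M.procLe_or_procLt (PF.sem_mem hn.1).2 (PF.sem_mem hgf).2 hl).resolve_right ?_
  exact fun hfn => M.not_procLt_of_procLe (hn.2 f (PF.sem_of_crossed h₂ hm₁g hn.1 hgf hfn).1) hfn

theorem isMaxOf_comp (h₁ : PF.inFrag {PDLOp.loop} π₁) (h₂ : PF.inFrag {PDLOp.loop} π₂)
    (htt : ∀ f ∈ M.E, EF.sat M tt f) (hm₁ : isMaxOf M (π₁.comp (.test (.dia π₂ tt))) e m₁)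
    (hn : isMaxOf M π₂ m₁ n) : isMaxOf M (π₁.comp π₂) e n := by
  have he₁ : PF.sem M π₁ e m₁ := ((sem_comp_test_dia_iff htt).1 hm₁.1).1
  refine ⟨⟨m₁, he₁, hn.1⟩, ?_⟩
  rintro f ⟨g, hg, hgf⟩
  have hgm₁ : M.procLe g m₁ := hm₁.2 g ((sem_comp_test_dia_iff htt).2 ⟨hg, f, hgf⟩)
  have hl : M.loc f = M.loc n :=
    PF.loc_eq_of_sem (π := π₁.comp π₂) ⟨h₁, h₂⟩ ⟨g, hg, hgf⟩ ⟨m₁, he₁, hn.1⟩ rfl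
  refine (M.procLe_or_procLt (PF.sem_mem hgf).2 (PF.sem_mem hn.1).2 hl).resolve_right ?_
  exact fun hnf => M.not_procLt_of_procLe (hn.2 f (PF.sem_of_crossed h₂ hgm₁ hgf hn.1 hnf).2) hnf

theorem forall_isMinOf_iff {π σ τ : PF P Lab} (hn : isMinOf M π e n)
    (hm₁ : isMinOf M σ e m₁) (hm₁n : isMinOf M τ m₁ n) :
    ∀ m, isMinOf M π e m ↔ ∃ m₁, isMinOf M σ e m₁ ∧ isMinOf M τ m₁ m := by
  intro m
  constructor
  · intro hm
    exact ⟨m₁, hm₁, isMinOf_unique hn hm ▸ hm₁n⟩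
  · rintro ⟨m₁', hm₁', hm⟩
    rw [isMinOf_unique hm₁' hm₁] at hm
    exact isMinOf_unique hm₁n hm ▸ hn

theorem forall_isMaxOf_iff {π σ τ : PF P Lab} (hn : isMaxOf M π e n)
    (hm₁ : isMaxOf M σ e m₁) (hm₁n : isMaxOf M τ m₁ n) :
    ∀ m, isMaxOf M π e m ↔ ∃ m₁, isMaxOf M σ e m₁ ∧ isMaxOf M τ m₁ m := by
  intro m
  constructor
  · intro hm
    exact ⟨m₁, hm₁, isMaxOf_unique hn hm ▸ hm₁n⟩
  · rintro ⟨m₁', hm₁', hm⟩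
    rw [isMaxOf_unique hm₁' hm₁] at hm
    exact isMaxOf_unique hm₁n hm ▸ hn

end Composition

end PDL

/-- For `PDLsf[Loop]` path formulas `π₁, π₂` and an event `e`
with `⟦π₁·π₂⟧(e) ≠ ∅`:
`min_{π₁·π₂}(e) = min_{π₂}(min_{π₁·(⟨π₂⟩true)?}(e))` and
`max_{π₁·π₂}(e) = max_{π₂}(max_{π₁·(⟨π₂⟩true)?}(e))`,
where `tt` is a tautological event formula. -/
theorem min_max_comp {P Lab : Type} [Fintype P] [Nonempty P] [Fintype Lab] [Nonempty Lab]
    (π₁ π₂ : PF P Lab)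
    (h1 : PF.inFrag {PDLOp.loop} π₁) (h2 : PF.inFrag {PDLOp.loop} π₂)
    (tt : EF P Lab) (htt : EF.inFrag {PDLOp.loop} tt)
    (httSem : ∀ (M : MSC P Lab) (e : ℕ), EF.sat M tt e ↔ e ∈ M.E)
    (M : MSC P Lab) (e : ℕ) (hne : ∃ f, PF.sem M (PF.comp π₁ π₂) e f) :
    (∀ m, isMinOf M (PF.comp π₁ π₂) e m ↔
      ∃ m₁, isMinOf M (PF.comp π₁ (PF.test (EF.dia π₂ tt))) e m₁ ∧
        isMinOf M π₂ m₁ m) ∧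
    (∀ m, isMaxOf M (PF.comp π₁ π₂) e m ↔
      ∃ m₁, isMaxOf M (PF.comp π₁ (PF.test (EF.dia π₂ tt))) e m₁ ∧
        isMaxOf M π₂ m₁ m) := by
  have htrue : ∀ f ∈ M.E, EF.sat M tt f := fun f => (httSem M f).2
  have hfrag : PF.inFrag {PDLOp.loop} (π₁.comp (.test (.dia π₂ tt))) := ⟨h1, h2, htt⟩
  obtain ⟨f, g, hg, hgf⟩ := hne
  have hne' : ∃ g, PF.sem M (π₁.comp (.test (.dia π₂ tt))) e g :=
    ⟨g, (sem_comp_test_dia_iff htrue).2 ⟨hg, f, hgf⟩⟩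
  obtain ⟨m₁, hm₁⟩ := exists_isMinOf hfrag hne'
  obtain ⟨n, hn⟩ := exists_isMinOf h2 ((sem_comp_test_dia_iff htrue).1 hm₁.1).2
  obtain ⟨m₁', hm₁'⟩ := exists_isMaxOf hfrag hne'
  obtain ⟨n', hn'⟩ := exists_isMaxOf h2 ((sem_comp_test_dia_iff htrue).1 hm₁'.1).2
  exact ⟨forall_isMinOf_iff (isMinOf_comp h1 h2 htrue hm₁ hn) hm₁ hn,
    forall_isMaxOf_iff (isMaxOf_comp h1 h2 htrue hm₁' hn') hm₁' hn'⟩
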